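/- Let α > 0, μ = ±1, A ∈ ℂ \ {0}, n ∈ ℤ \ {0}, s ∈ ℝ, and fix t ∈ ℝ. Let u(t) be the exact plane-wave solution of the fractional NLS with datum u₀(x) = A|n|^{−s} e^{inx}, and let u_h(t) = S_h(t) d_h u₀ be the corresponding exact plane-wave solution of the fractional discrete NLS. Then, as h → 0 along h = π/M, the discrete L² error satisfies ‖u_h(t) − d_h u(t)‖_{L²_h} = ( (√(2π)/24) |A| |t| |n|^{2−3s} · | α|n|^{α+2s} + 2μ|A|² | ) h² + O(h³); in particular the discretized error converges quadratically in h. -/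

import Mathlib

open scoped BigOperators ENNReal NNReal
open MeasureTheory

noncomputable section

/-- Mesh size `h = π / M`. -/
def mesh (M : ℕ) : ℝ := Real.pi / M

/-- Index set `{-M, …, M-1}` for the periodic lattice `𝕋_h` and its dual `𝕋_h*`. -/
def idx (M : ℕ) : Finset ℤ := Finset.Icc (-(M : ℤ)) ((M : ℤ) - 1)

/-- Lattice point `x = h j`. -/
def pt (M : ℕ) (j : ℤ) : ℝ := mesh M * j

/-- Discrete `L^p_h` norm (finite `p`), w.r.t. the normalized counting measure. -/
def dLp (M : ℕ) (p : ℝ) (f : ℤ → ℂ) : ℝ :=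
  (mesh M * ∑ j ∈ idx M, ‖f j‖ ^ p) ^ (1 / p)

/-- Discrete `L^∞_h` norm. -/
def dLinf (M : ℕ) (f : ℤ → ℂ) : ℝ :=
  ⨆ j : (idx M), ‖f (j : ℤ)‖

/-- Discrete Fourier transform `𝓕_h f (k) = h ∑_{x ∈ 𝕋_h} f(x) e^{-ikx}`. -/
def dFT (M : ℕ) (f : ℤ → ℂ) (k : ℤ) : ℂ :=
  (mesh M : ℂ) * ∑ j ∈ idx M, f j * Complex.exp (-Complex.I * (k : ℂ) * (pt M j : ℂ))

/-- Discrete Sobolev norm `‖f‖_{H^s_h}`. -/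
def dSob (M : ℕ) (s : ℝ) (f : ℤ → ℂ) : ℝ :=
  Real.sqrt ((2 * Real.pi)⁻¹ * ∑ k ∈ idx M, (1 + (k : ℝ) ^ 2) ^ s * ‖dFT M f k‖ ^ 2)

/-- Symbol `σ_h(ξ) = |(2/h) sin(hξ/2)|^α` of the discrete fractional Laplacian. -/
def dsymb (M : ℕ) (α ξ : ℝ) : ℝ := |2 / mesh M * Real.sin (mesh M * ξ / 2)| ^ α

/-- Discrete linear propagator `U_h(t) = e^{-it(-Δ_h)^{α/2}}`. -/
def Uh (M : ℕ) (α t : ℝ) (f : ℤ → ℂ) (j : ℤ) : ℂ :=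
  (2 * Real.pi)⁻¹ * ∑ k ∈ idx M,
    Complex.exp (-Complex.I * (t : ℂ) * ((dsymb M α k : ℝ) : ℂ)) * dFT M f k *
      Complex.exp (Complex.I * (k : ℂ) * (pt M j : ℂ))

/-- Fourier coefficient on the torus `𝕋 = [-π, π)`. -/
def fCoef (f : ℝ → ℂ) (k : ℤ) : ℂ :=
  ∫ x in (-Real.pi)..Real.pi, f x * Complex.exp (-Complex.I * (k : ℂ) * (x : ℂ))

/-- `L²(𝕋)` norm. -/
def cL2 (f : ℝ → ℂ) : ℝ :=
  Real.sqrt (∫ x in (-Real.pi)..Real.pi, ‖f x‖ ^ 2)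

/-- Sobolev `H^s(𝕋)` norm. -/
def cSob (s : ℝ) (f : ℝ → ℂ) : ℝ :=
  Real.sqrt ((2 * Real.pi)⁻¹ * ∑' k : ℤ, (1 + (k : ℝ) ^ 2) ^ s * ‖fCoef f k‖ ^ 2)

/-- Membership in `H^s(𝕋)`. -/
def inHs (s : ℝ) (f : ℝ → ℂ) : Prop :=
  Summable fun k : ℤ => (1 + (k : ℝ) ^ 2) ^ s * ‖fCoef f k‖ ^ 2

/-- Continuum propagator `U(t) = e^{-it(-Δ)^{α/2}}` on the torus. -/
def Uc (α t : ℝ) (f : ℝ → ℂ) (x : ℝ) : ℂ :=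
  (2 * Real.pi)⁻¹ * ∑' k : ℤ,
    Complex.exp (-Complex.I * (t : ℂ) * ((|(k : ℝ)| ^ α : ℝ) : ℂ)) * fCoef f k *
      Complex.exp (Complex.I * (k : ℂ) * (x : ℂ))

/-- Discretization operator `d_h f (x) = h⁻¹ ∫_x^{x+h} f`. -/
def dh (M : ℕ) (f : ℝ → ℂ) (j : ℤ) : ℂ :=
  ((mesh M : ℝ) : ℂ)⁻¹ * ∫ x in (pt M j)..(pt M j + mesh M), f x

/-- Linear interpolation operator `p_h`. -/
def ph (M : ℕ) (g : ℤ → ℂ) (x : ℝ) : ℂ :=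
  g ⌊x / mesh M⌋ + (g (⌊x / mesh M⌋ + 1) - g ⌊x / mesh M⌋) *
    (((x - pt M ⌊x / mesh M⌋) / mesh M : ℝ) : ℂ)

/-- Cubic nonlinearity `|f|² f` on the lattice. -/
def cubic (f : ℤ → ℂ) (j : ℤ) : ℂ := ((‖f j‖ ^ 2 : ℝ) : ℂ) * f j

/-- Cubic nonlinearity `|f|² f` on the torus. -/
def cubicC (f : ℝ → ℂ) (x : ℝ) : ℂ := ((‖f x‖ ^ 2 : ℝ) : ℂ) * f x

/-- `u` solves the fractional discrete NLS with datum `u0` on the time set `I`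
(Duhamel formulation). -/
def IsDSol (M : ℕ) (α μ : ℝ) (I : Set ℝ) (u0 : ℤ → ℂ) (u : ℝ → ℤ → ℂ) : Prop :=
  (∀ j : ℤ, u 0 j = u0 j) ∧
  ∀ t ∈ I, ∀ j : ℤ, u t j =
    Uh M α t u0 j - Complex.I * (μ : ℂ) * ∫ τ in (0:ℝ)..t, Uh M α (t - τ) (cubic (u τ)) j

/-- `u` solves the fractional NLS on the torus with datum `u0` on the time set `I`
(Duhamel formulation). -/
def IsCSol (α μ : ℝ) (I : Set ℝ) (u0 : ℝ → ℂ) (u : ℝ → ℝ → ℂ) : Prop :=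
  (∀ x : ℝ, u 0 x = u0 x) ∧
  ∀ t ∈ I, ∀ x : ℝ, u t x =
    Uc α t u0 x - Complex.I * (μ : ℂ) * ∫ τ in (0:ℝ)..t, Uc α (t - τ) (cubicC (u τ)) x


/-- The exact plane-wave solution of the fractional NLS with datum `A|n|^{-s} e^{inx}`. -/
def planeWave (α μ s : ℝ) (A : ℂ) (n : ℤ) (t x : ℝ) : ℂ :=
  A * ((|(n : ℝ)| ^ (-s) : ℝ) : ℂ) *
    Complex.exp (-Complex.I * (t : ℂ) *
      ((|(n : ℝ)| ^ α + μ * ‖A‖ ^ 2 * |(n : ℝ)| ^ (-2 * s) : ℝ) : ℂ)) *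
    Complex.exp (Complex.I * (n : ℂ) * (x : ℂ))

/-- `B = (e^{ihn} - 1)/(ihn)`. -/
def Bfac (M : ℕ) (n : ℤ) : ℂ :=
  (Complex.exp (Complex.I * (mesh M : ℂ) * (n : ℂ)) - 1) / (Complex.I * (mesh M : ℂ) * (n : ℂ))

/-- The exact plane-wave solution of the fractional discrete NLS with datum `d_h u₀`. -/
def planeWaveD (M : ℕ) (α μ s : ℝ) (A : ℂ) (n : ℤ) (t : ℝ) (j : ℤ) : ℂ :=
  A * ((|(n : ℝ)| ^ (-s) : ℝ) : ℂ) * Bfac M n *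
    Complex.exp (-Complex.I * (t : ℂ) *
      ((|2 / mesh M * Real.sin (mesh M * n / 2)| ^ α
        + μ * ‖A‖ ^ 2 * |(n : ℝ)| ^ (-2 * s) * ‖Bfac M n‖ ^ 2 : ℝ) : ℂ)) *
    Complex.exp (Complex.I * (n : ℂ) * ((pt M j : ℝ) : ℂ))

/-!
At every lattice point both `u_h(t)` and `d_h u(t)` are multiples of `e^{inx}`, with amplitudes
differing by the factor `B` and by the phase `e^{-itδ}`, where `δ` is the difference between the
discrete and the continuous frequency. Hence the error has constant modulus
`|A| |n|^{-s} |B| |e^{-itδ} - 1|` on the lattice, and its `L²_h` norm is `√(2π)` times that.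
With `y = hn/2` one has `|B| = sinc y` and `|(2/h) sin(hn/2)| = |n| sinc y`, and the expansion
`(sinc y)^β = 1 - β y²/6 + O(y⁴)` (for `β = α` and `β = 2`) gives
`δ = -(α|n|^α + 2μ|A|²|n|^{-2s}) y²/6 + O(y⁴)`. Since `|e^{iθ} - 1| = |θ| + O(θ²)`, the error
is the stated multiple of `h²` up to `O(h⁴)`.
-/

open Real Asymptotics Filter Topology

theorem log_sub_sub_one_isBigO :
    (fun x : ℝ => log x - (x - 1)) =O[𝓝 1] fun x => (x - 1) ^ 2 := by
  refine .of_bound 2 ?_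
  filter_upwards [lt_mem_nhds (by norm_num : (1 / 2 : ℝ) < 1)] with x hx
  have hx0 : 0 < x := by linarith
  have hlow := one_sub_inv_le_log_of_pos hx0
  have hup := log_le_sub_one_of_pos hx0
  have hgap : (x - 1) - (1 - x⁻¹) ≤ 2 * (x - 1) ^ 2 := by
    rw [show (x - 1) - (1 - x⁻¹) = (x - 1) ^ 2 / x by field_simp, div_le_iff₀ hx0]
    nlinarith [sq_nonneg (x - 1)]
  rw [norm_eq_abs, norm_eq_abs, abs_of_nonpos (by linarith), abs_of_nonneg (sq_nonneg _)]
  linarith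

theorem rpow_sub_one_sub_mul_isBigO (β : ℝ) :
    (fun x : ℝ => x ^ β - (1 + β * (x - 1))) =O[𝓝 1] fun x => (x - 1) ^ 2 := by
  have hlog : (fun x : ℝ => log x * β) =O[𝓝 1] fun x => x - 1 := by
    simpa [mul_comm] using ((differentiableAt_log one_ne_zero).isBigO_sub).const_mul_left β
  have hlog0 : Tendsto (fun x : ℝ => log x * β) (𝓝 1) (𝓝 0) := by
    simpa using (continuousAt_log one_ne_zero).tendsto.mul_const β
  have hexp :
      (fun x : ℝ => exp (log x * β) - (1 + log x * β)) =O[𝓝 1] fun x => (x - 1) ^ 2 := by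
    simpa [Finset.sum_range_succ, Function.comp_def] using
      ((exp_sub_sum_range_isBigO_pow 2).comp_tendsto hlog0).trans (hlog.pow 2)
  refine (hexp.add (log_sub_sub_one_isBigO.const_mul_left β)).congr' ?_ .rfl
  filter_upwards [lt_mem_nhds one_pos] with x hx
  rw [rpow_def_of_pos hx]
  ring

theorem sinc_sub_isBigO : (fun y => sinc y - (1 - y ^ 2 / 6)) =O[𝓝 0] (· ^ 4) := by
  refine .of_bound 1 ?_
  filter_upwards [Metric.closedBall_mem_nhds (0 : ℝ) one_pos] with y hy
  rw [Metric.mem_closedBall, dist_zero_right, norm_eq_abs] at hy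
  rcases eq_or_ne y 0 with rfl | hy0
  · simp
  have hb := sin_bound hy
  rw [sinc_of_ne_zero hy0, norm_eq_abs, norm_eq_abs, one_mul, abs_pow,
    show sin y / y - (1 - y ^ 2 / 6) = (sin y - (y - y ^ 3 / 6)) / y by field_simp,
    abs_div, div_le_iff₀ (abs_pos.2 hy0)]
  nlinarith [pow_nonneg (abs_nonneg y) 5]

theorem eventually_abs_sinc_eq : ∀ᶠ y in 𝓝 0, |sinc y| = sinc y := by
  filter_upwards [continuousAt_const.eventually_lt continuous_sinc.continuousAt
    (by simp : (0 : ℝ) < sinc 0)] with y hy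
  exact abs_of_pos hy

theorem abs_sinc_sub_one_isBigO : (fun y => |sinc y| - 1) =O[𝓝 0] (· ^ 2) := by
  refine (sinc_sub_isBigO.trans (isLittleO_pow_pow (by norm_num)).isBigO |>.sub
    ((isBigO_refl (fun y : ℝ => y ^ 2) _).const_mul_left (1 / 6))).congr' ?_ .rfl
  filter_upwards [eventually_abs_sinc_eq] with y hy
  rw [hy]
  ring

theorem abs_sinc_rpow_sub_isBigO (β : ℝ) :
    (fun y => |sinc y| ^ β - (1 - β * y ^ 2 / 6)) =O[𝓝 0] (· ^ 4) := by
  have hlim : Tendsto (fun y => |sinc y|) (𝓝 0) (𝓝 1) := by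
    simpa using continuous_sinc.abs.tendsto 0
  have hrpow := ((rpow_sub_one_sub_mul_isBigO β).comp_tendsto hlim).trans
    (by simpa [Function.comp_def, ← pow_mul] using abs_sinc_sub_one_isBigO.pow 2)
  refine (hrpow.add (sinc_sub_isBigO.const_mul_left β)).congr' ?_ .rfl
  filter_upwards [eventually_abs_sinc_eq] with y hy
  simp only [Function.comp_apply, hy]
  ring

theorem norm_exp_I_mul_sub_one_sub_abs_isBigO :
    (fun θ : ℝ => ‖Complex.exp (Complex.I * θ) - 1‖ - |θ|) =O[𝓝 0] (· ^ 2) := by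
  refine .of_bound 1 ?_
  filter_upwards [Metric.closedBall_mem_nhds (0 : ℝ) one_pos] with θ hθ
  rw [Metric.mem_closedBall, dist_zero_right] at hθ
  have hIθ : ‖Complex.I * θ‖ = ‖θ‖ := by simp
  rw [one_mul, norm_pow, ← hIθ, norm_eq_abs, ← norm_eq_abs θ, ← hIθ]
  exact (abs_norm_sub_norm_le _ _).trans (Complex.norm_exp_sub_one_sub_id_le (hIθ ▸ hθ))

/-- With `y = hn/2`, `a = |n|^α` and `b = μ|A|²|n|^{-2s}`, this is the difference between the
frequencies of the discrete and of the continuous plane wave. -/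
def freqError (α a b y : ℝ) : ℝ := a * |sinc y| ^ α + b * |sinc y| ^ 2 - (a + b)

theorem freqError_add_isBigO (α a b : ℝ) :
    (fun y => freqError α a b y + (α * a + 2 * b) * y ^ 2 / 6) =O[𝓝 0] (· ^ 4) := by
  refine (((abs_sinc_rpow_sub_isBigO α).const_mul_left a).add
    ((abs_sinc_rpow_sub_isBigO 2).const_mul_left b)).congr (fun y => ?_) fun _ => rfl
  rw [freqError, rpow_two]
  ring

theorem abs_sinc_mul_norm_exp_sub_one_isBigO (α a b t : ℝ) :
    (fun y => |sinc y| * ‖Complex.exp (Complex.I * ↑(t * freqError α a b y)) - 1‖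
      - |t * (α * a + 2 * b)| * y ^ 2 / 6) =O[𝓝 0] (· ^ 4) := by
  set c := t * (α * a + 2 * b)
  set θ := fun y => t * freqError α a b y
  have hθc : (fun y => θ y + c * y ^ 2 / 6) =O[𝓝 0] (· ^ 4) :=
    ((freqError_add_isBigO α a b).const_mul_left t).congr (fun y => by ring) fun _ => rfl
  have hθ : θ =O[𝓝 0] (· ^ 2) :=
    ((hθc.trans (isLittleO_pow_pow (by norm_num)).isBigO).sub
      ((isBigO_refl (· ^ 2) _).const_mul_left (c / 6))).congr (fun y => by ring) fun _ => rfl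
  have hθ0 : Tendsto θ (𝓝 0) (𝓝 0) :=
    hθ.trans_tendsto (by simpa using (continuous_pow 2).tendsto (0 : ℝ))
  have hexp : (fun y => ‖Complex.exp (Complex.I * ↑(θ y)) - 1‖ - |θ y|) =O[𝓝 0] (· ^ 4) := by
    simpa [Function.comp_def, ← pow_mul] using
      (norm_exp_I_mul_sub_one_sub_abs_isBigO.comp_tendsto hθ0).trans (hθ.pow 2)
  have habs : (fun y => |θ y| - |c| * y ^ 2 / 6) =O[𝓝 0] (· ^ 4) := by
    refine (isBigO_of_le _ fun y => ?_).trans hθc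
    have hc : |c| * y ^ 2 / 6 = |-(c * y ^ 2 / 6)| := by
      rw [abs_neg, abs_div, abs_mul c, abs_sq, abs_of_pos (by norm_num : (0 : ℝ) < 6)]
    rw [norm_eq_abs, norm_eq_abs, hc, ← sub_neg_eq_add]
    exact abs_abs_sub_abs_le_abs_sub _ _
  have hsinc : (fun y => |sinc y|) =O[𝓝 0] (fun _ => (1 : ℝ)) :=
    .of_bound 1 (.of_forall fun y => by simpa using abs_sinc_le_one y)
  have hmain : (fun y => |sinc y| *
      (‖Complex.exp (Complex.I * ↑(θ y)) - 1‖ - |c| * y ^ 2 / 6)) =O[𝓝 0] (· ^ 4) := by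
    simpa using hsinc.mul (hexp.add habs)
  have hrest : (fun y => (|sinc y| - 1) * (|c| * y ^ 2 / 6)) =O[𝓝 0] (· ^ 4) :=
    (abs_sinc_sub_one_isBigO.mul ((isBigO_refl (· ^ 2) _).const_mul_left (|c| / 6))).congr
      (fun y => by ring) fun y => by ring
  exact (hmain.add hrest).congr (fun y => by ring) fun _ => rfl

theorem norm_exp_I_mul_sub_one_div (x : ℝ) (hx : x ≠ 0) :
    ‖(Complex.exp (Complex.I * x) - 1) / (Complex.I * x)‖ = |sinc (x / 2)| := by
  rw [norm_div, Complex.norm_exp_I_mul_ofReal_sub_one, sinc_of_ne_zero (by simpa using hx)]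
  simp only [norm_mul, norm_ofNat, norm_eq_abs, Complex.norm_I,
    Complex.norm_real, one_mul, abs_div, Nat.abs_ofNat]
  field_simp

theorem norm_Bfac (M : ℕ) (n : ℤ) (h : mesh M * n ≠ 0) :
    ‖Bfac M n‖ = |sinc (mesh M * n / 2)| := by
  rw [← norm_exp_I_mul_sub_one_div _ h, Bfac]
  push_cast
  ring_nf

theorem abs_two_div_mul_sin (h ξ : ℝ) (hh : h ≠ 0) :
    |2 / h * sin (h * ξ / 2)| = |ξ| * |sinc (h * ξ / 2)| := by
  rcases eq_or_ne ξ 0 with rfl | hξ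
  · simp
  rw [sinc_of_ne_zero (by positivity), abs_mul, abs_div, abs_div, abs_div, abs_mul]
  field_simp

theorem dh_const_mul_exp (M : ℕ) (hM : mesh M ≠ 0) (n : ℤ) (hn : n ≠ 0) (c : ℂ) (j : ℤ) :
    dh M (fun x : ℝ => c * Complex.exp (Complex.I * (n : ℂ) * (x : ℂ))) j
      = c * Bfac M n * Complex.exp (Complex.I * (n : ℂ) * ((pt M j : ℝ) : ℂ)) := by
  have hc : Complex.I * n ≠ 0 := mul_ne_zero Complex.I_ne_zero (Int.cast_ne_zero.mpr hn)
  rw [dh, intervalIntegral.integral_const_mul, integral_exp_mul_complex hc, Bfac]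
  have hshift : Complex.exp (Complex.I * n * ↑(pt M j + mesh M))
      = Complex.exp (Complex.I * n * (pt M j : ℝ)) * Complex.exp (Complex.I * mesh M * n) := by
    rw [← Complex.exp_add]; push_cast; ring_nf
  rw [hshift]
  field_simp [Complex.ofReal_ne_zero.mpr hM]

theorem dLp_two_of_norm_eq (M : ℕ) (hM : M ≠ 0) (f : ℤ → ℂ) (c : ℝ)
    (hf : ∀ j ∈ idx M, ‖f j‖ = c) :
    dLp M 2 f = √(2 * π) * c := by
  have hc : 0 ≤ c := hf 0 (Finset.mem_Icc.2 ⟨by omega, by omega⟩) ▸ norm_nonneg _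
  have hcard : (idx M).card = 2 * M := by rw [idx, Int.card_Icc]; omega
  rw [dLp, Finset.sum_congr rfl fun j hj => by rw [hf j hj], Finset.sum_const, hcard,
    nsmul_eq_mul, mesh, rpow_two, ← sqrt_eq_rpow]
  have hM' : (M : ℝ) ≠ 0 := by exact_mod_cast hM
  rw [show π / M * (↑(2 * M) * c ^ 2) = 2 * π * c ^ 2 by push_cast; field_simp,
    sqrt_mul (by positivity), sqrt_sq hc]

theorem planeWaveD_sub_dh (M : ℕ) (hM : M ≠ 0) (α μ s t : ℝ) (A : ℂ) (n : ℤ) (hn : n ≠ 0)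
    (j : ℤ) :
    planeWaveD M α μ s A n t j - dh M (planeWave α μ s A n t) j
      = A * ((|(n : ℝ)| ^ (-s) : ℝ) : ℂ) * Bfac M n *
        Complex.exp (-Complex.I * t *
          ((|(n : ℝ)| ^ α + μ * ‖A‖ ^ 2 * |(n : ℝ)| ^ (-2 * s) : ℝ) : ℂ)) *
        (Complex.exp (Complex.I * ↑(-t * freqError α (|(n : ℝ)| ^ α)
          (μ * ‖A‖ ^ 2 * |(n : ℝ)| ^ (-2 * s)) (mesh M * n / 2))) - 1) *
        Complex.exp (Complex.I * n * (pt M j : ℝ)) := by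
  have hmesh : mesh M ≠ 0 := div_ne_zero pi_ne_zero (Nat.cast_ne_zero.2 hM)
  have hfreq : |2 / mesh M * sin (mesh M * n / 2)| ^ α
      + μ * ‖A‖ ^ 2 * |(n : ℝ)| ^ (-2 * s) * ‖Bfac M n‖ ^ 2
      = (|(n : ℝ)| ^ α + μ * ‖A‖ ^ 2 * |(n : ℝ)| ^ (-2 * s)) + freqError α (|(n : ℝ)| ^ α)
          (μ * ‖A‖ ^ 2 * |(n : ℝ)| ^ (-2 * s)) (mesh M * n / 2) := by
    rw [abs_two_div_mul_sin _ _ hmesh, mul_rpow (abs_nonneg _) (abs_nonneg _),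
      norm_Bfac M n (mul_ne_zero hmesh (Int.cast_ne_zero.2 hn)), freqError]
    ring
  set φ := |(n : ℝ)| ^ α + μ * ‖A‖ ^ 2 * |(n : ℝ)| ^ (-2 * s)
  set δ := freqError α (|(n : ℝ)| ^ α) (μ * ‖A‖ ^ 2 * |(n : ℝ)| ^ (-2 * s)) (mesh M * n / 2)
  have hsplit : Complex.exp (-Complex.I * t * ((φ + δ : ℝ) : ℂ))
      = Complex.exp (-Complex.I * t * (φ : ℂ)) * Complex.exp (Complex.I * ↑(-t * δ)) := by
    rw [← Complex.exp_add]; push_cast; ring_nf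
  rw [planeWaveD, hfreq, hsplit, show planeWave α μ s A n t
    = fun x : ℝ => _ * Complex.exp (Complex.I * n * x) from rfl, dh_const_mul_exp M hmesh n hn]
  ring

theorem dLp_planeWaveD_sub_dh (M : ℕ) (hM : M ≠ 0) (α μ s t : ℝ) (A : ℂ) (n : ℤ)
    (hn : n ≠ 0) :
    dLp M 2 (fun j => planeWaveD M α μ s A n t j - dh M (planeWave α μ s A n t) j)
      = √(2 * π) * (‖A‖ * |(n : ℝ)| ^ (-s) * |sinc (mesh M * n / 2)| *
        ‖Complex.exp (Complex.I * ↑(-t * freqError α (|(n : ℝ)| ^ α)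
          (μ * ‖A‖ ^ 2 * |(n : ℝ)| ^ (-2 * s)) (mesh M * n / 2))) - 1‖) := by
  have hmesh : mesh M ≠ 0 := div_ne_zero pi_ne_zero (Nat.cast_ne_zero.2 hM)
  refine dLp_two_of_norm_eq M hM _ _ fun j _ => ?_
  have hphase : ∀ x : ℝ, (-Complex.I * t * x).re = 0 := by simp
  have hwave : (Complex.I * n * (pt M j : ℝ)).re = 0 := by simp
  rw [planeWaveD_sub_dh M hM α μ s t A n hn j, norm_mul, norm_mul, norm_mul, norm_mul, norm_mul,
    norm_Bfac M n (mul_ne_zero hmesh (Int.cast_ne_zero.2 hn)), Complex.norm_real, norm_eq_abs,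
    abs_of_nonneg (rpow_nonneg (abs_nonneg _) _), Complex.norm_exp, hphase, Complex.norm_exp,
    hwave, exp_zero]
  ring

theorem rpow_neg_mul_abs_add_mul_sq (α μ s c ν : ℝ) (hν : 0 < ν) :
    ν ^ (-s) * |α * ν ^ α + 2 * (μ * c * ν ^ (-2 * s))| * ν ^ 2
      = ν ^ (2 - 3 * s) * |α * ν ^ (α + 2 * s) + 2 * μ * c| := by
  have hα : ν ^ α = ν ^ (-2 * s) * ν ^ (α + 2 * s) := by rw [← rpow_add hν]; ring_nf
  have h3s : ν ^ (2 - 3 * s) = ν ^ (-s) * ν ^ (-2 * s) * ν ^ 2 := by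
    rw [← rpow_natCast, ← rpow_add hν, ← rpow_add hν]; push_cast; ring_nf
  rw [hα, h3s, show α * (ν ^ (-2 * s) * ν ^ (α + 2 * s)) + 2 * (μ * c * ν ^ (-2 * s))
    = ν ^ (-2 * s) * (α * ν ^ (α + 2 * s) + 2 * μ * c) by ring, abs_mul,
    abs_of_pos (rpow_pos_of_pos hν _)]
  ring

theorem mesh_nonneg (M : ℕ) : 0 ≤ mesh M := div_nonneg pi_pos.le M.cast_nonneg

theorem tendsto_mesh : Tendsto mesh atTop (𝓝 0) := tendsto_const_div_atTop_nhds_zero_nat π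

theorem dLp_planeWaveD_sub_dh_sub_isBigO (α μ s t : ℝ) (A : ℂ) (n : ℤ) (hn : n ≠ 0) :
    (fun M => dLp M 2 (fun j => planeWaveD M α μ s A n t j - dh M (planeWave α μ s A n t) j)
        - √(2 * π) / 24 * ‖A‖ * |t| * |(n : ℝ)| ^ (2 - 3 * s) *
            |α * |(n : ℝ)| ^ (α + 2 * s) + 2 * μ * ‖A‖ ^ 2| * mesh M ^ 2)
      =O[atTop] fun M => mesh M ^ 3 := by
  have hy : Tendsto (fun M : ℕ => mesh M * n / 2) atTop (𝓝 0) := by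
    simpa using (tendsto_mesh.mul_const (n : ℝ)).div_const 2
  have hy4 : (fun M : ℕ => (mesh M * n / 2) ^ 4) =O[atTop] fun M => mesh M ^ 3 :=
    ((isBigO_refl _ _).const_mul_left (((n : ℝ) / 2) ^ 4)).trans
      ((isLittleO_pow_pow (by norm_num : 3 < 4)).isBigO.comp_tendsto tendsto_mesh) |>.congr
      (fun M => by simp only [Function.comp_apply]; ring) fun _ => rfl
  refine ((((abs_sinc_mul_norm_exp_sub_one_isBigO α (|(n : ℝ)| ^ α)
    (μ * ‖A‖ ^ 2 * |(n : ℝ)| ^ (-2 * s)) (-t)).comp_tendsto hy).trans hy4).const_mul_left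
    (√(2 * π) * (‖A‖ * |(n : ℝ)| ^ (-s)))).congr' ?_ .rfl
  filter_upwards [eventually_ne_atTop 0] with M hM
  have hcoeff :=
    rpow_neg_mul_abs_add_mul_sq α μ s (‖A‖ ^ 2) _ (abs_pos.2 (Int.cast_ne_zero.2 hn))
  rw [Function.comp_apply, dLp_planeWaveD_sub_dh M hM α μ s t A n hn, abs_mul, abs_neg]
  linear_combination (√(2 * π) / 24 * ‖A‖ * |t| * mesh M ^ 2) *
    (|(n : ℝ)| ^ (-s) * |α * |(n : ℝ)| ^ α + 2 * (μ * ‖A‖ ^ 2 * |(n : ℝ)| ^ (-2 * s))| *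
      sq_abs (n : ℝ) - hcoeff)

theorem statement17_general (α μ s t : ℝ)
    (A : ℂ) (n : ℤ) (hn : n ≠ 0) :
    ∃ C > (0:ℝ), ∃ M₀ : ℕ, ∀ M : ℕ, M₀ ≤ M →
      |dLp M 2 (fun j => planeWaveD M α μ s A n t j - dh M (planeWave α μ s A n t) j)
          - Real.sqrt (2 * Real.pi) / 24 * ‖A‖ * |t| * |(n : ℝ)| ^ (2 - 3 * s) *
              |α * |(n : ℝ)| ^ (α + 2 * s) + 2 * μ * ‖A‖ ^ 2| * mesh M ^ 2|
        ≤ C * mesh M ^ 3 := by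
  obtain ⟨C, hC, hbound⟩ := (dLp_planeWaveD_sub_dh_sub_isBigO α μ s t A n hn).exists_pos
  obtain ⟨M₀, hM₀⟩ := eventually_atTop.1 hbound.bound
  exact ⟨C, hC, M₀, fun M hM => by simpa [abs_of_nonneg (mesh_nonneg M)] using hM₀ M hM⟩

/-- equation (4.10): sharp quadratic convergence of the discretized
plane-wave error in `L²_h`. -/
theorem statement17 (α μ s t : ℝ) (hα : 0 < α) (hμ : μ = 1 ∨ μ = -1)
    (A : ℂ) (hA : A ≠ 0) (n : ℤ) (hn : n ≠ 0) :
    ∃ C > (0:ℝ), ∃ M₀ : ℕ, ∀ M : ℕ, M₀ ≤ M →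
      |dLp M 2 (fun j => planeWaveD M α μ s A n t j - dh M (planeWave α μ s A n t) j)
          - Real.sqrt (2 * Real.pi) / 24 * ‖A‖ * |t| * |(n : ℝ)| ^ (2 - 3 * s) *
              |α * |(n : ℝ)| ^ (α + 2 * s) + 2 * μ * ‖A‖ ^ 2| * mesh M ^ 2|
        ≤ C * mesh M ^ 3 :=
  statement17_general α μ s t A n hn

end
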